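/- Let τ ∈ (0,1) and let p1, p2 ≥ 0 be integers with p1 ≡ p2 (mod 2). Then lim_{N→∞} M_τ(p1,p2,N) / N^{(p1+p2)/2 + 1} = C1(p1,p2). -/

import Mathlib

/-!
For `k ≥ min p1 p2` the constraint `r ≤ k` in `Mell` is void, and every summand is of order `k ^ d`,
`d = (p1 + p2) / 2`: in `A_τ(p, k - r, k)` only the `l = 0` term is of top order, namely
`τ ^ a * binom(p, a) * k ^ a` with `a = (p + r) / 2`, the prefactor `(k - r)! / k!` behaves like
`k ^ (-r)`, and the exponents add up to `a₁ + a₂ - r = d`. A sequence with `u k / k ^ d → c` has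
partial sums with `(∑_{k<N} u k) / N ^ (d + 1) → c / (d + 1)`, by Stolz–Cesàro against the
telescoping sequence `(k + 1) ^ (d + 1) - k ^ (d + 1)`.
-/

open Finset Filter

/-- `1/n!` for an integer `n`, with the convention that `1/n! = 0` for negative `n`. -/
noncomputable def invfac (n : ℤ) : ℝ := if 0 ≤ n then ((n.toNat).factorial : ℝ)⁻¹ else 0

/-- Binomial coefficient `binom(n, m)` for `n : ℕ`, `m : ℤ`, zero for `m < 0` or `m > n`. -/
noncomputable def zbinom (n : ℕ) (m : ℤ) : ℝ :=
  if 0 ≤ m ∧ m ≤ (n : ℤ) then (n.choose m.toNat : ℝ) else 0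

/-- The Hermite expansion coefficients `A_τ(p, j, k)`. -/
noncomputable def Aher (τ : ℝ) (p : ℕ) (j : ℤ) (k : ℕ) : ℝ :=
  if 0 ≤ j ∧ |j - (k : ℤ)| ≤ (p : ℤ) ∧ (j - (k : ℤ)) % 2 = (p : ℤ) % 2 then
    τ ^ ((((p : ℤ) + k - j) / 2).toNat) *
      ∑ l ∈ Finset.range (p / 2 + 1),
        (p.factorial : ℝ) * ((2 : ℝ) ^ l * (l.factorial : ℝ))⁻¹ *
          invfac (((p : ℤ) - k + j) / 2 - l) *
          zbinom k (((p : ℤ) + k - j) / 2 - l)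
  else 0

/-- `I_p = {−p, −p+2, …, p−2, p}`, the integers between `−p` and `p` with the parity of `p`. -/
noncomputable def Ip (p : ℕ) : Finset ℤ :=
  (Finset.Icc (-(p : ℤ)) (p : ℤ)).filter fun r => r % 2 = (p : ℤ) % 2

/-- The spectral moment `M_τ(p1, p2, N)` of the complex elliptic Ginibre ensemble. -/
noncomputable def Mell (τ : ℝ) (p1 p2 N : ℕ) : ℝ :=
  ∑ k ∈ Finset.range N,
    ∑ r ∈ (Ip (min p1 p2)).filter (fun r => r ≤ (k : ℤ)),
      ((((k : ℤ) - r).toNat.factorial : ℝ) / (k.factorial : ℝ)) *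
        Aher τ p1 ((k : ℤ) - r) k * Aher τ p2 ((k : ℤ) - r) k

/-- The leading moment coefficient `C1(p1, p2)` of the elliptic law. -/
noncomputable def C1 (τ : ℝ) (p1 p2 : ℕ) : ℝ :=
  (((p1 + p2) / 2 + 1 : ℕ) : ℝ)⁻¹ *
    ∑ r ∈ Ip (min p1 p2),
      τ ^ (((((p1 : ℤ) + p2) / 2) + r).toNat) *
        zbinom p1 (((p1 : ℤ) + r) / 2) * zbinom p2 (((p2 : ℤ) + r) / 2)

open Asymptotics Topology

lemma tendsto_prod_add_div_pow (a : ℕ → ℝ) (m : ℕ) :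
    Tendsto (fun k : ℕ => (∏ i ∈ range m, ((k : ℝ) + a i)) / (k : ℝ) ^ m) atTop (𝓝 1) := by
  have h : ∀ i, Tendsto (fun k : ℕ => 1 + a i / k) atTop (𝓝 1) := fun i => by
    simpa using tendsto_const_nhds.add (tendsto_const_div_atTop_nhds_zero_nat (a i))
  have := tendsto_finsetProd (range m) fun i _ => h i
  rw [prod_const_one] at this
  refine this.congr' ?_
  filter_upwards [eventually_gt_atTop 0] with k hk
  have hk : (k : ℝ) ≠ 0 := by positivity
  rw [show (k : ℝ) ^ m = ∏ _i ∈ range m, (k : ℝ) by simp, ← prod_div_distrib]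
  exact prod_congr rfl fun i _ => by field_simp

lemma tendsto_descFactorial_div_pow (m : ℕ) :
    Tendsto (fun k : ℕ => (k.descFactorial m : ℝ) / (k : ℝ) ^ m) atTop (𝓝 1) := by
  refine (tendsto_prod_add_div_pow (fun i => -i) m).congr' ?_
  filter_upwards [eventually_ge_atTop m] with k hk
  rw [Nat.descFactorial_eq_prod_range, Nat.cast_prod]
  congr 1
  exact prod_congr rfl fun i hi => by
    rw [Nat.cast_sub ((mem_range.mp hi).le.trans hk)]; ring

lemma tendsto_ascFactorial_div_pow (m : ℕ) :
    Tendsto (fun k : ℕ => ((k + 1).ascFactorial m : ℝ) / (k : ℝ) ^ m) atTop (𝓝 1) := by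
  refine (tendsto_prod_add_div_pow (fun i => i + 1) m).congr fun k => ?_
  rw [Nat.ascFactorial_eq_prod_range, Nat.cast_prod]
  congr 1
  exact prod_congr rfl fun i _ => by push_cast; ring

lemma tendsto_choose_div_pow (m : ℕ) :
    Tendsto (fun k : ℕ => (k.choose m : ℝ) / (k : ℝ) ^ m) atTop (𝓝 (m.factorial : ℝ)⁻¹) := by
  rw [← one_div]
  refine ((tendsto_descFactorial_div_pow m).div_const (m.factorial : ℝ)).congr fun k => ?_
  rw [Nat.descFactorial_eq_factorial_mul_choose, Nat.cast_mul]
  field_simp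

lemma tendsto_factorial_sub_div_factorial_mul_zpow (r : ℤ) :
    Tendsto (fun k : ℕ => (((k : ℤ) - r).toNat.factorial : ℝ) / k.factorial * (k : ℝ) ^ r)
      atTop (𝓝 1) := by
  obtain ⟨n, rfl | rfl⟩ := r.eq_nat_or_neg
  · rw [← inv_one]
    refine ((tendsto_descFactorial_div_pow n).inv₀ one_ne_zero).congr' ?_
    filter_upwards [eventually_ge_atTop n] with k hk
    rw [← Nat.factorial_mul_descFactorial hk, show ((k : ℤ) - n).toNat = k - n by omega]
    have : (k.descFactorial n : ℝ) ≠ 0 := by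
      exact_mod_cast (Nat.descFactorial_pos.mpr hk).ne'
    push_cast
    rw [zpow_natCast]
    field_simp
  · refine (tendsto_ascFactorial_div_pow n).congr' ?_
    filter_upwards [eventually_gt_atTop 0] with k hk
    rw [show ((k : ℤ) - -(n : ℤ)).toNat = k + n by omega, ← Nat.factorial_mul_ascFactorial]
    push_cast
    rw [zpow_neg, zpow_natCast]
    field_simp

/-- Stolz–Cesàro theorem. -/
theorem Filter.Tendsto.sum_range_div_sum_range {u g : ℕ → ℝ} {L : ℝ}
    (h : Tendsto (fun k => u k / g k) atTop (𝓝 L)) (hg : ∀ k, 0 < g k)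
    (hG : Tendsto (fun N => ∑ k ∈ range N, g k) atTop atTop) :
    Tendsto (fun N => (∑ k ∈ range N, u k) / ∑ k ∈ range N, g k) atTop (𝓝 L) := by
  have ho : (fun k => u k - L * g k) =o[atTop] g := by
    rw [isLittleO_iff_tendsto fun k hk => absurd hk (hg k).ne']
    have := h.sub_const L
    rw [sub_self] at this
    refine this.congr fun k => ?_
    field_simp [(hg k).ne']
  have := ((ho.sum_range (fun k => (hg k).le) hG).tendsto_div_nhds_zero).add_const L
  rw [zero_add] at this
  refine this.congr' ?_
  filter_upwards [hG.eventually_gt_atTop 0] with N hN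
  rw [sum_sub_distrib, ← mul_sum]
  field_simp
  ring

/-- This is the difference quotient of `x ^ (d + 1)` at `1` with increment `1 / k`. -/
lemma tendsto_pow_succ_sub_pow_div_pow (d : ℕ) :
    Tendsto (fun k : ℕ => (((k : ℝ) + 1) ^ (d + 1) - (k : ℝ) ^ (d + 1)) / (k : ℝ) ^ d)
      atTop (𝓝 (d + 1)) := by
  have hslope := (hasDerivAt_pow (d + 1) (1 : ℝ)).tendsto_slope_zero_right
  have hinv : Tendsto (fun k : ℕ => (k : ℝ)⁻¹) atTop (𝓝[>] 0) :=
    tendsto_inv_atTop_nhdsGT_zero.comp tendsto_natCast_atTop_atTop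
  have := hslope.comp hinv
  simp only [one_pow, mul_one, Nat.add_sub_cancel, Nat.cast_add, Nat.cast_one] at this
  refine this.congr' ?_
  filter_upwards [eventually_gt_atTop 0] with k hk
  have hk : (k : ℝ) ≠ 0 := by positivity
  simp only [Function.comp_apply, smul_eq_mul, inv_inv]
  rw [show 1 + (k : ℝ)⁻¹ = (k + 1) / k by field_simp, div_pow]
  field_simp
  ring

theorem tendsto_sum_range_div_pow_succ {u : ℕ → ℝ} {c : ℝ} {d : ℕ}
    (h : Tendsto (fun k => u k / (k : ℝ) ^ d) atTop (𝓝 c)) :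
    Tendsto (fun N => (∑ k ∈ range N, u k) / (N : ℝ) ^ (d + 1)) atTop (𝓝 (c / (d + 1))) := by
  set g : ℕ → ℝ := fun k => ((k : ℝ) + 1) ^ (d + 1) - (k : ℝ) ^ (d + 1)
  have hsum (N : ℕ) : ∑ k ∈ range N, g k = (N : ℝ) ^ (d + 1) := by
    simpa [g] using sum_range_sub (fun k : ℕ => (k : ℝ) ^ (d + 1)) N
  have hg (k : ℕ) : 0 < g k :=
    sub_pos.mpr (pow_lt_pow_left₀ (lt_add_one _) k.cast_nonneg d.succ_ne_zero)
  have hG : Tendsto (fun N => ∑ k ∈ range N, g k) atTop atTop := by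
    simp only [hsum]
    exact (tendsto_pow_atTop d.succ_ne_zero).comp tendsto_natCast_atTop_atTop
  have hratio : Tendsto (fun k => u k / g k) atTop (𝓝 (c / (d + 1))) := by
    refine (h.div (tendsto_pow_succ_sub_pow_div_pow d) (by positivity)).congr' ?_
    filter_upwards [eventually_gt_atTop 0] with k hk
    have hk : (k : ℝ) ^ d ≠ 0 := by positivity
    simp only [Pi.div_apply, g]
    field_simp
  simpa only [hsum] using hratio.sum_range_div_sum_range hg hG

lemma zbinom_natCast (n m : ℕ) : zbinom n m = n.choose m := by
  unfold zbinom
  split_ifs with h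
  · rfl
  · rw [Nat.choose_eq_zero_of_lt (by omega), Nat.cast_zero]

lemma zbinom_of_neg (n : ℕ) {m : ℤ} (hm : m < 0) : zbinom n m = 0 :=
  if_neg fun h => by omega

lemma invfac_natCast (n : ℕ) : invfac n = (n.factorial : ℝ)⁻¹ :=
  if_pos n.cast_nonneg

lemma tendsto_zbinom_sub_div_pow (a l : ℕ) :
    Tendsto (fun k : ℕ => zbinom k ((a : ℤ) - l) / (k : ℝ) ^ a) atTop
      (𝓝 (if l = 0 then (a.factorial : ℝ)⁻¹ else 0)) := by
  rcases Nat.eq_zero_or_pos l with rfl | hl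
  · simpa [zbinom_natCast] using tendsto_choose_div_pow a
  rw [if_neg hl.ne']
  rcases lt_or_ge a l with hal | hla
  · simp [zbinom_of_neg _ (show (a : ℤ) - l < 0 by omega)]
  have hpow : Tendsto (fun k : ℕ => ((k : ℝ) ^ l)⁻¹) atTop (𝓝 0) :=
    ((tendsto_pow_atTop hl.ne').comp tendsto_natCast_atTop_atTop).inv_tendsto_atTop
  have := (tendsto_choose_div_pow (a - l)).mul hpow
  rw [mul_zero] at this
  refine this.congr' ?_
  filter_upwards [eventually_gt_atTop 0] with k hk
  rw [show (a : ℤ) - l = ((a - l : ℕ) : ℤ) by omega, zbinom_natCast,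
    ← Nat.sub_add_cancel hla, pow_add, Nat.add_sub_cancel]
  field_simp

lemma Aher_sub_eq (τ : ℝ) {p a : ℕ} {r : ℤ} (hra : (p : ℤ) + r = 2 * a) (hap : a ≤ p) {k : ℕ}
    (hrk : r ≤ k) :
    Aher τ p (k - r) k = τ ^ a * ∑ l ∈ range (p / 2 + 1),
      (p.factorial : ℝ) * ((2 : ℝ) ^ l * l.factorial)⁻¹ * invfac (((p - a : ℕ) : ℤ) - l) *
        zbinom k ((a : ℤ) - l) := by
  have hcond : 0 ≤ (k : ℤ) - r ∧ |(k : ℤ) - r - k| ≤ p ∧ ((k : ℤ) - r - k) % 2 = (p : ℤ) % 2 :=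
    ⟨by omega, abs_le.mpr ⟨by omega, by omega⟩, by omega⟩
  rw [Aher, if_pos hcond, show ((p : ℤ) + k - (k - r)) / 2 = a by omega,
    show ((p : ℤ) - k + (k - r)) / 2 = ((p - a : ℕ) : ℤ) by omega, Int.toNat_natCast]

lemma tendsto_Aher_sub_div_pow (τ : ℝ) {p a : ℕ} {r : ℤ} (hra : (p : ℤ) + r = 2 * a)
    (hap : a ≤ p) :
    Tendsto (fun k : ℕ => Aher τ p (k - r) k / (k : ℝ) ^ a) atTop
      (𝓝 (τ ^ a * p.choose a)) := by
  have hterms := tendsto_finsetSum (range (p / 2 + 1)) fun l _ =>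
    (tendsto_zbinom_sub_div_pow a l).const_mul
      ((p.factorial : ℝ) * ((2 : ℝ) ^ l * l.factorial)⁻¹ * invfac (((p - a : ℕ) : ℤ) - l))
  simp only [mul_ite, mul_zero, sum_ite_eq', mem_range, Nat.zero_lt_succ, if_true] at hterms
  have hlim : (p.factorial : ℝ) * ((2 : ℝ) ^ 0 * (0 : ℕ).factorial)⁻¹ *
      invfac (((p - a : ℕ) : ℤ) - (0 : ℕ)) * (a.factorial : ℝ)⁻¹ = p.choose a := by
    rw [Nat.cast_choose ℝ hap, Int.natCast_zero, sub_zero, invfac_natCast]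
    simp only [pow_zero, Nat.factorial_zero, Nat.cast_one, mul_one, inv_one]
    field_simp
  rw [hlim] at hterms
  refine (hterms.const_mul (τ ^ a)).congr' ?_
  filter_upwards [eventually_ge_atTop p] with k hk
  rw [Aher_sub_eq τ hra hap (by omega), mul_div_assoc, sum_div]
  simp only [mul_div_assoc]

lemma tendsto_factorial_mul_Aher_mul_Aher_div_pow (τ : ℝ) {p₁ p₂ a₁ a₂ : ℕ} {r : ℤ}
    (h₁ : (p₁ : ℤ) + r = 2 * a₁) (h₂ : (p₂ : ℤ) + r = 2 * a₂) (ha₁ : a₁ ≤ p₁) (ha₂ : a₂ ≤ p₂) :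
    Tendsto (fun k : ℕ => (((k : ℤ) - r).toNat.factorial : ℝ) / k.factorial *
        Aher τ p₁ (k - r) k * Aher τ p₂ (k - r) k / (k : ℝ) ^ ((p₁ + p₂) / 2))
      atTop (𝓝 (τ ^ a₁ * p₁.choose a₁ * (τ ^ a₂ * p₂.choose a₂))) := by
  have := ((tendsto_factorial_sub_div_factorial_mul_zpow r).mul
    (tendsto_Aher_sub_div_pow τ h₁ ha₁)).mul (tendsto_Aher_sub_div_pow τ h₂ ha₂)
  rw [one_mul] at this
  refine this.congr' ?_
  filter_upwards [eventually_gt_atTop 0] with k hk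
  have hk : (k : ℝ) ≠ 0 := by positivity
  have hpow : (k : ℝ) ^ a₁ * (k : ℝ) ^ a₂ = (k : ℝ) ^ r * (k : ℝ) ^ ((p₁ + p₂) / 2) := by
    rw [← pow_add, ← zpow_natCast, ← zpow_natCast _ ((p₁ + p₂) / 2), ← zpow_add₀ hk]
    congr 1
    omega
  field_simp
  linear_combination (-(Aher τ p₁ (k - r) k * Aher τ p₂ (k - r) k)) * hpow

lemma tendsto_Mell_summand_div_pow (τ : ℝ) {p₁ p₂ : ℕ} (hpar : p₁ % 2 = p₂ % 2) {r : ℤ}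
    (hr : r ∈ Ip (min p₁ p₂)) :
    Tendsto (fun k : ℕ => (((k : ℤ) - r).toNat.factorial : ℝ) / k.factorial *
        Aher τ p₁ (k - r) k * Aher τ p₂ (k - r) k / (k : ℝ) ^ ((p₁ + p₂) / 2))
      atTop (𝓝 (τ ^ ((((p₁ : ℤ) + p₂) / 2 + r).toNat) * zbinom p₁ ((p₁ + r) / 2) *
        zbinom p₂ ((p₂ + r) / 2))) := by
  simp only [Ip, mem_filter, mem_Icc] at hr
  obtain ⟨a₁, ha₁⟩ : ∃ a : ℕ, ((p₁ : ℤ) + r) / 2 = a := ⟨((p₁ + r) / 2).toNat, by omega⟩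
  obtain ⟨a₂, ha₂⟩ : ∃ a : ℕ, ((p₂ : ℤ) + r) / 2 = a := ⟨((p₂ + r) / 2).toNat, by omega⟩
  rw [ha₁, ha₂, zbinom_natCast, zbinom_natCast,
    show (((p₁ : ℤ) + p₂) / 2 + r).toNat = a₁ + a₂ by omega, pow_add]
  have h₁ : (p₁ : ℤ) + r = 2 * a₁ := by omega
  have h₂ : (p₂ : ℤ) + r = 2 * a₂ := by omega
  convert tendsto_factorial_mul_Aher_mul_Aher_div_pow τ h₁ h₂ (by omega) (by omega) using 2
  ring

theorem elliptic_moment_limit_general (τ : ℝ) (p1 p2 : ℕ) (hpar : p1 % 2 = p2 % 2) :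
    Tendsto (fun N : ℕ => Mell τ p1 p2 N / (N : ℝ) ^ ((p1 + p2) / 2 + 1))
      atTop (nhds (C1 τ p1 p2)) := by
  have hsummands := tendsto_finsetSum _ fun r hr => tendsto_Mell_summand_div_pow τ hpar hr
  unfold Mell
  convert tendsto_sum_range_div_pow_succ (hsummands.congr' ?_) using 2
  · rw [C1, div_eq_inv_mul]
    push_cast
    rfl
  filter_upwards [eventually_ge_atTop (min p1 p2)] with k hk
  rw [← sum_div, filter_true_of_mem fun r hr => ?_]
  simp only [Ip, mem_filter, mem_Icc] at hr
  omega

/-- For `τ ∈ (0,1)` and `p1 ≡ p2 (mod 2)`, the spectral moments of the complex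
elliptic Ginibre ensemble satisfy `M_τ(p1,p2,N) / N^{(p1+p2)/2+1} → C1(p1,p2)` as `N → ∞`. -/
theorem elliptic_moment_limit (τ : ℝ) (hτ0 : 0 < τ) (hτ1 : τ < 1)
    (p1 p2 : ℕ) (hpar : p1 % 2 = p2 % 2) :
    Tendsto (fun N : ℕ => Mell τ p1 p2 N / (N : ℝ) ^ ((p1 + p2) / 2 + 1))
      atTop (nhds (C1 τ p1 p2)) :=
  elliptic_moment_limit_general τ p1 p2 hpar
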